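/- arXiv:2202.10074 — 4 statements merged into one kernel-verified Lean document; each statement's English description precedes it below -/
import Mathlib

section
/- There is an absolute constant C > 0 with the following property. Let K ⊂ ℝ³ be a convex body and E an ellipsoid with E ⊂ K ⊂ 3^{3/2}E, whose principal radii are r₁ ≤ r₂ ≤ r₃ in the orthonormal directions e₁, e₂, e₃. Let I = [m, M] be the orthogonal projection of K onto the e₃-axis (identified with an interval in ℝ). Let ε ∈ (0, 1/2), let x ∈ ∂K satisfy min(x·e₃ − m, M − x·e₃) ≥ ε r₃, and let ν be an outer unit normal of K at x. Then |ν·e₃| ≤ C r₂ / (ε r₃). In particular, as r₂/r₃ → 0 the outer normals at such points converge to the equator {u ∈ S² : u·e₃ = 0}. -/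
open MeasureTheory Metric Set Filter
open scoped RealInnerProductSpace ENNReal NNReal Real

noncomputable section

abbrev E3 := EuclideanSpace ℝ (Fin 3)

def unitSphere : Set E3 := Metric.sphere 0 1

def IsConvexBody (K : Set E3) : Prop :=
  Convex ℝ K ∧ IsCompact K ∧ (interior K).Nonempty

def suppFn (K : Set E3) (x : E3) : ℝ := sSup ((fun y => ⟪x, y⟫) '' K)

def outerNormalAt (K : Set E3) (x ν : E3) : Prop :=
  ‖ν‖ = 1 ∧ ∀ z ∈ K, ⟪ν, z - x⟫ ≤ (0:ℝ)

def gaussPre (K : Set E3) (ω : Set E3) : Set E3 :=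
  {x ∈ frontier K | ∃ ν ∈ ω, outerNormalAt K x ν}

def coneOver (G : Set E3) : Set E3 := {y | ∃ x ∈ G, ∃ t ∈ Set.Icc (0:ℝ) 1, y = t • x}

def SolvesLMP (K : Set E3) (f : E3 → ℝ) : Prop :=
  ∀ ω : Set E3, ω ⊆ unitSphere → MeasurableSet ω →
    3 * (volume (coneOver (gaussPre K ω))).toReal = ∫ u in ω, f u ∂(μH[2])

def sphSupNorm (f : E3 → ℝ) : ℝ := sSup {c | ∃ x ∈ unitSphere, c = |f x|}

def sphHolderSemi (α : ℝ) (f : E3 → ℝ) : ℝ :=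
  sSup {c | ∃ x ∈ unitSphere, ∃ y ∈ unitSphere, x ≠ y ∧ c = |f x - f y| / ‖x - y‖ ^ α}

def sphHolderNorm (α : ℝ) (f : E3 → ℝ) : ℝ := sphSupNorm f + sphHolderSemi α f

def IsEllipsoid (E : Set E3) (c : E3) (e : Fin 3 → E3) (r : Fin 3 → ℝ) : Prop :=
  (∀ i, 0 < r i) ∧ Orthonormal ℝ e ∧
  E = {x : E3 | (∑ i, (⟪x - c, e i⟫ / r i) ^ 2) ≤ 1}

def dilate (c : E3) (s : ℝ) (A : Set E3) : Set E3 := (fun x => c + s • (x - c)) '' A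

def centerOfMass (K : Set E3) : E3 := ((volume K).toReal)⁻¹ • ∫ x in K, x

/-- `E ⊆ K ⊆ 3^{3/2} E`, the dilation taken about the center `c` of `E`. -/
def IsJohnEllipsoid (K E : Set E3) (c : E3) : Prop :=
  E ⊆ K ∧ K ⊆ dilate c ((3:ℝ) ^ ((3:ℝ) / 2)) E

/-!
Since `K ⊆ s E` with `s = 3^{3/2}`, any two points of `K` differ by at most `2 s rᵢ` in the
direction `eᵢ`. Expanding `⟪ν, z - x⟫ ≤ 0` in the basis `e` therefore gives
`ν₃ (z - x)₃ ≤ 2 s (r₁ + r₂) ≤ 4 s r₂` for every `z ∈ K`. Taking for `z` a point of `K` that is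
extreme in the direction `sign(ν₃) e₃`, the hypothesis on `x` gives `(z - x)₃ ≥ ε r₃` in absolute
value, whence `|ν₃| ε r₃ ≤ 4 s r₂`. (Paper indices `1, 2, 3` are `0, 1, 2` in the code.)
-/

theorem Orthonormal.sum_inner_mul_inner_of_card_eq_finrank {ι E : Type*}
    [NormedAddCommGroup E] [InnerProductSpace ℝ E] [Fintype ι] [Nonempty ι] {e : ι → E}
    (he : Orthonormal ℝ e) (hcard : Fintype.card ι = Module.finrank ℝ E) (v w : E) :
    ∑ i, ⟪v, e i⟫ * ⟪e i, w⟫ = ⟪v, w⟫ := by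
  let b := basisOfOrthonormalOfCardEqFinrank he hcard
  have hb : ⇑b = e := coe_basisOfOrthonormalOfCardEqFinrank he hcard
  let ob := b.toOrthonormalBasis (by rwa [hb])
  have hob : ⇑ob = e := by rw [Module.Basis.coe_toOrthonormalBasis, hb]
  rw [← ob.sum_inner_mul_inner v w, hob]

theorem abs_mul_le_of_le_sub_of_le_sub {a t m M δ B : ℝ}
    (hM : δ ≤ M - t) (hm : δ ≤ t - m) (hBM : a * (M - t) ≤ B) (hBm : a * (m - t) ≤ B) :
    |a| * δ ≤ B := by
  rcases le_or_gt 0 a with ha | ha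
  · rw [abs_of_nonneg ha]; nlinarith
  · rw [abs_of_neg ha]; nlinarith

namespace IsEllipsoid

variable {E : Set E3} {c : E3} {e : Fin 3 → E3} {r : Fin 3 → ℝ}

theorem abs_inner_sub_center_le (hE : IsEllipsoid E c e r) {x : E3} (hx : x ∈ E) (i : Fin 3) :
    |⟪x - c, e i⟫| ≤ r i := by
  obtain ⟨hr, -, rfl⟩ := hE
  have hi : (⟪x - c, e i⟫ / r i) ^ 2 ≤ 1 :=
    (Finset.single_le_sum (f := fun j => (⟪x - c, e j⟫ / r j) ^ 2)
      (fun j _ => sq_nonneg _) (Finset.mem_univ i)).trans hx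
  rw [sq_le_one_iff_abs_le_one, abs_div, abs_of_pos (hr i), div_le_one (hr i)] at hi
  exact hi

theorem abs_inner_sub_center_le_of_mem_dilate (hE : IsEllipsoid E c e r) {s : ℝ} (hs : 0 ≤ s)
    {w : E3} (hw : w ∈ dilate c s E) (i : Fin 3) : |⟪w - c, e i⟫| ≤ s * r i := by
  obtain ⟨x, hx, rfl⟩ := hw
  rw [add_sub_cancel_left, real_inner_smul_left, abs_mul, abs_of_nonneg hs]
  exact mul_le_mul_of_nonneg_left (hE.abs_inner_sub_center_le hx i) hs

theorem abs_inner_sub_le_of_mem_dilate (hE : IsEllipsoid E c e r) {s : ℝ} (hs : 0 ≤ s)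
    {z w : E3} (hz : z ∈ dilate c s E) (hw : w ∈ dilate c s E) (i : Fin 3) :
    |⟪z - w, e i⟫| ≤ 2 * s * r i := by
  have hzw : z - w = (z - c) - (w - c) := by abel
  rw [hzw, inner_sub_left]
  linarith [abs_sub (⟪z - c, e i⟫) (⟪w - c, e i⟫),
    hE.abs_inner_sub_center_le_of_mem_dilate hs hz i,
    hE.abs_inner_sub_center_le_of_mem_dilate hs hw i]

theorem inner_normal_mul_inner_sub_le (hE : IsEllipsoid E c e r) {s : ℝ} (hs : 0 ≤ s)
    {K : Set E3} (hKE : K ⊆ dilate c s E) {x ν z : E3} (hx : x ∈ K) (hν : outerNormalAt K x ν)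
    (hz : z ∈ K) : ⟪ν, e 2⟫ * ⟪z - x, e 2⟫ ≤ 2 * s * (r 0 + r 1) := by
  have he := hE.2.1
  have hνe : ∀ i, |⟪ν, e i⟫ * ⟪e i, z - x⟫| ≤ 2 * s * r i := fun i => by
    have hνi : |⟪ν, e i⟫| ≤ 1 := by
      simpa [hν.1, he.1 i] using abs_real_inner_le_norm ν (e i)
    rw [abs_mul, real_inner_comm (z - x)]
    exact (mul_le_of_le_one_left (abs_nonneg _) hνi).trans
      (hE.abs_inner_sub_le_of_mem_dilate hs (hKE hz) (hKE hx) i)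
  have hnormal := hν.2 z hz
  rw [← he.sum_inner_mul_inner_of_card_eq_finrank (by simp) ν (z - x),
    Fin.sum_univ_three, real_inner_comm (z - x) (e 2)] at hnormal
  linarith [(abs_le.1 (hνe 0)).1, (abs_le.1 (hνe 1)).1]

end IsEllipsoid

theorem stmt6 :
    ∃ C > 0, ∀ (K E : Set E3) (c : E3) (e : Fin 3 → E3) (r : Fin 3 → ℝ),
      IsConvexBody K → IsEllipsoid E c e r → r 0 ≤ r 1 → r 1 ≤ r 2 →
      E ⊆ K → K ⊆ dilate c ((3:ℝ) ^ ((3:ℝ) / 2)) E →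
      ∀ ε ∈ Set.Ioo (0:ℝ) (1/2), ∀ x ∈ frontier K, ∀ ν : E3,
        min (⟪x, e 2⟫ - sInf ((fun y => ⟪y, e 2⟫) '' K))
            (sSup ((fun y => ⟪y, e 2⟫) '' K) - ⟪x, e 2⟫) ≥ ε * r 2 →
        outerNormalAt K x ν →
        |⟪ν, e 2⟫| ≤ C * r 1 / (ε * r 2) := by
  set s : ℝ := (3:ℝ) ^ ((3:ℝ) / 2)
  have hs : 0 ≤ s := by positivity
  refine ⟨4 * s, by positivity, ?_⟩
  rintro K E c e r ⟨-, hKcpt, hKint⟩ hE hr01 - - hKE ε ⟨hε, -⟩ x hx ν hmin hν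
  have hxK : x ∈ K := hKcpt.isClosed.frontier_subset hx
  have hKne : K.Nonempty := hKint.mono interior_subset
  have hcont : ContinuousOn (fun y : E3 => ⟪y, e 2⟫) K := by fun_prop
  obtain ⟨zM, hzM, hzM_eq⟩ := hKcpt.exists_sSup_image_eq hKne hcont
  obtain ⟨zm, hzm, hzm_eq⟩ := hKcpt.exists_sInf_image_eq hKne hcont
  rw [hzM_eq, hzm_eq, ge_iff_le, le_min_iff] at hmin
  have hbound : ∀ z ∈ K, ⟪ν, e 2⟫ * (⟪z, e 2⟫ - ⟪x, e 2⟫) ≤ 4 * s * r 1 := fun z hz => by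
    have := hE.inner_normal_mul_inner_sub_le hs hKE hxK hν hz
    rw [inner_sub_left] at this
    linarith [mul_le_mul_of_nonneg_left hr01 hs]
  rw [le_div_iff₀ (mul_pos hε (hE.1 2))]
  exact abs_mul_le_of_le_sub_of_le_sub hmin.2 hmin.1 (hbound zM hzM) (hbound zm hzm)
end
end

section
/- For every c₀ ∈ (0, 1/3) and λ' ≥ 1 there exists c > 0 depending only on c₀ and λ' with the following property. Let K ⊂ ℝ³ be a convex body containing the origin o in its closure, and let E be an ellipsoid centered at the center of mass of K with E ⊂ K ⊂ 3^{3/2}E, principal radii r₁ ≤ r₂ ≤ r₃ in directions e₁, e₂, e₃, and r₃/r₂ ≥ λ'. Let I = [m, M] be the projection of K onto the e₃-axis and suppose min(o·e₃ − m, M − o·e₃) ≥ c₀ r₃. Set G := {x ∈ ∂K : min(x·e₃ − m, M − x·e₃) ≥ (c₀/3) r₃}. Then the union of the segments joining o to points of G has volume at least c · r₁ r₂ r₃. -/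
/-!
Assume `0 ≤ ⟪cc, e 2⟫` (otherwise replace `e 2` by `-e 2` and the lowest point of `K` by the
highest). The homothety of ratio `t` centred at a lowest point `p` of `K` maps the ellipsoid `E`
into `K`, and for the right `t ≳ c₀` its image is centred at height `⟪·, e 2⟫ = 0`. That image
contains a box of size `≍ t r₀ × t r₁ × t² r₂` sitting at heights in `[0, O(t² r₂)]` and at
distance `≳ t r₀` from `o` in the `e 0` direction. Since `|⟪x, e 0⟫| = O(r₀)` on `K`, the ray from
`o` through a point of the box leaves `K` after stretching by a factor `O(1/t)`, hence at height
`O(t r₂) ≤ (2/3) c₀ r₂`, i.e. through a point of `G`. So the box lies in the cone over `G`.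
-/


open MeasureTheory Metric Set Filter
open scoped RealInnerProductSpace ENNReal NNReal Real

noncomputable section

open Topology

theorem exists_one_le_smul_mem_frontier {F : Type*} [NormedAddCommGroup F] [NormedSpace ℝ F]
    {K : Set F} (hK : IsCompact K) {y : F} (hy : y ∈ K) (hy0 : y ≠ 0) :
    ∃ τ : ℝ, 1 ≤ τ ∧ τ • y ∈ frontier K := by
  have hT : IsCompact {t : ℝ | t • y ∈ K} := (isClosedEmbedding_smul_left hy0).isCompact_preimage hK
  have h1 : (1 : ℝ) ∈ {t : ℝ | t • y ∈ K} := by simpa using hy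
  refine ⟨sSup {t : ℝ | t • y ∈ K}, le_csSup hT.bddAbove h1, ?_⟩
  rw [frontier_eq_closure_inter_closure]
  refine ⟨subset_closure (hT.sSup_mem ⟨1, h1⟩),
    mem_closure_of_tendsto (b := 𝓝[>] sSup {t : ℝ | t • y ∈ K})
      (((continuous_id.smul continuous_const).tendsto _).mono_left nhdsWithin_le_nhds) ?_⟩
  exact eventually_nhdsWithin_of_forall fun t hτt htK => (le_csSup hT.bddAbove htK).not_gt hτt

theorem mem_coneOver_of_one_le_smul_mem {G : Set E3} {y : E3} {τ : ℝ} (hτ : 1 ≤ τ)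
    (hy : τ • y ∈ G) : y ∈ coneOver G :=
  ⟨τ • y, hy, τ⁻¹, ⟨by positivity, inv_le_one_of_one_le₀ hτ⟩,
    by rw [smul_smul, inv_mul_cancel₀ (by positivity), one_smul]⟩

theorem coneOver_mono {G G' : Set E3} (h : G ⊆ G') : coneOver G ⊆ coneOver G' :=
  fun _ ⟨x, hx, t, ht, hy⟩ => ⟨x, h hx, t, ht, hy⟩

theorem Orthonormal.volume_setOf_inner_mem_Icc {ι F : Type*} [Fintype ι]
    [NormedAddCommGroup F] [InnerProductSpace ℝ F] [FiniteDimensional ℝ F]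
    [MeasurableSpace F] [BorelSpace F] {e : ι → F} (he : Orthonormal ℝ e)
    (hcard : Fintype.card ι = Module.finrank ℝ F) (lo hi : ι → ℝ) :
    volume {x : F | ∀ i, ⟪x, e i⟫ ∈ Icc (lo i) (hi i)} = ∏ i, ENNReal.ofReal (hi i - lo i) := by
  let b := OrthonormalBasis.mk he (he.linearIndependent.span_eq_top_of_card_eq_finrank' hcard).ge
  have hset : {x : F | ∀ i, ⟪x, e i⟫ ∈ Icc (lo i) (hi i)}
      = b.repr ⁻¹' (WithLp.ofLp ⁻¹' Set.univ.pi fun i => Icc (lo i) (hi i)) := by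
    ext x
    simp only [mem_ofPred_eq, mem_preimage, mem_univ_pi, b.repr_apply_apply, b,
      OrthonormalBasis.coe_mk, real_inner_comm]
  have hmeas : MeasurableSet (Set.univ.pi fun i => Icc (lo i) (hi i)) :=
    MeasurableSet.univ_pi fun _ => measurableSet_Icc
  rw [hset, b.measurePreserving_repr.measure_preimage
      ((PiLp.volume_preserving_ofLp ι).measurable hmeas).nullMeasurableSet,
    (PiLp.volume_preserving_ofLp ι).measure_preimage hmeas.nullMeasurableSet, volume_pi_pi]
  simp [Real.volume_Icc]

theorem exists_Icc_subset_Icc_le_abs (z : ℝ) {δ : ℝ} (hδ : 0 < δ) :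
    ∃ l, Icc l (l + δ) ⊆ Icc (z - 2 * δ) (z + 2 * δ) ∧ ∀ s ∈ Icc l (l + δ), δ ≤ |s| := by
  rcases le_total 0 z with hz | hz
  · refine ⟨z + δ, Icc_subset_Icc (by linarith) (by linarith), fun s hs => ?_⟩
    exact le_abs.2 (Or.inl (by linarith [hs.1]))
  · refine ⟨z - 2 * δ, Icc_subset_Icc le_rfl (by linarith), fun s hs => ?_⟩
    exact le_abs.2 (Or.inr (by linarith [hs.2]))

section Ellipsoid

variable {E : Set E3} {c : E3} {e : Fin 3 → E3} {r : Fin 3 → ℝ}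

theorem IsEllipsoid.mem_of_abs_inner_sub_le (hE : IsEllipsoid E c e r) {y : E3}
    (hy : ∀ i, |⟪y - c, e i⟫| ≤ r i / 2) : y ∈ E := by
  have hterm : ∀ i, (⟪y - c, e i⟫ / r i) ^ 2 ≤ 1 / 4 := fun i => by
    have hsq := pow_le_pow_left₀ (abs_nonneg _) (hy i) 2
    rw [sq_abs] at hsq
    rw [div_pow, div_le_iff₀ (pow_pos (hE.1 i) 2)]
    linarith
  rw [hE.2.2, mem_ofPred_eq, Fin.sum_univ_three]
  linarith [hterm 0, hterm 1, hterm 2]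

theorem IsEllipsoid.abs_inner_sub_le_of_mem_dilate_s7 (hE : IsEllipsoid E c e r) {Λ : ℝ}
    (hΛ : 0 ≤ Λ) {k : E3} (hk : k ∈ dilate c Λ E) (i : Fin 3) : |⟪k - c, e i⟫| ≤ Λ * r i := by
  obtain ⟨x, hx, rfl⟩ := hk
  rw [hE.2.2] at hx
  have hsq : (⟪x - c, e i⟫ / r i) ^ 2 ≤ 1 :=
    (Finset.single_le_sum (fun j _ => sq_nonneg (⟪x - c, e j⟫ / r j)) (Finset.mem_univ i)).trans hx
  rw [sq_le_one_iff_abs_le_one, abs_div, abs_of_pos (hE.1 i), div_le_one (hE.1 i)] at hsq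
  rw [add_sub_cancel_left, real_inner_smul_left, abs_mul, abs_of_nonneg hΛ]
  exact mul_le_mul_of_nonneg_left hsq hΛ

theorem IsEllipsoid.abs_inner_le_of_mem_dilate (hE : IsEllipsoid E c e r) {Λ : ℝ}
    (hΛ : 0 ≤ Λ) (h0 : 0 ∈ dilate c Λ E) {k : E3} (hk : k ∈ dilate c Λ E) (i : Fin 3) :
    |⟪k, e i⟫| ≤ 2 * Λ * r i := by
  have hk' := hE.abs_inner_sub_le_of_mem_dilate_s7 hΛ hk i
  have h0' := hE.abs_inner_sub_le_of_mem_dilate_s7 hΛ h0 i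
  rw [inner_sub_left] at hk' h0'
  rw [inner_zero_left, zero_sub, abs_neg] at h0'
  linarith [abs_sub_abs_le_abs_sub ⟪k, e i⟫ ⟪c, e i⟫]

theorem IsEllipsoid.update_neg (hE : IsEllipsoid E c e r) (j : Fin 3) :
    IsEllipsoid E c (Function.update e j (-e j)) r := by
  obtain ⟨hr, he, rfl⟩ := hE
  have hsq : ∀ x i, ⟪x, Function.update e j (-e j) i⟫ ^ 2 = ⟪x, e i⟫ ^ 2 := fun x i => by
    rcases eq_or_ne i j with rfl | h
    · rw [Function.update_self, inner_neg_right, neg_sq]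
    · rw [Function.update_of_ne h]
  refine ⟨hr, he.orthonormal_of_forall_eq_or_eq_neg fun i => ?_, ?_⟩
  · rcases eq_or_ne i j with rfl | h
    · exact Or.inr (Function.update_self ..)
    · exact Or.inl (Function.update_of_ne h ..)
  · ext x
    simp only [mem_ofPred_eq, div_pow, hsq]

theorem Convex.mem_of_abs_inner_sub_homothety_le {K : Set E3} (hK : Convex ℝ K)
    (hE : IsEllipsoid E c e r) (hEK : E ⊆ K) {p : E3} (hp : p ∈ K) {t : ℝ} (ht0 : 0 < t)
    (ht1 : t ≤ 1) {y : E3} (hy : ∀ i, |⟪y - (p + t • (c - p)), e i⟫| ≤ t * r i / 2) :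
    y ∈ K := by
  set x := p + t⁻¹ • (y - p)
  have hxc : x - c = t⁻¹ • (y - (p + t • (c - p))) := by
    simp only [x, smul_sub, smul_add, smul_smul, inv_mul_cancel₀ ht0.ne', one_smul]
    abel
  have hx : x ∈ K := hEK <| hE.mem_of_abs_inner_sub_le fun i => by
    rw [hxc, real_inner_smul_left, abs_mul, abs_inv, abs_of_pos ht0, inv_mul_le_iff₀ ht0]
    linarith [hy i]
  have hyx : y = (1 - t) • p + t • x := by
    simp only [x, smul_add, smul_sub, smul_smul, mul_inv_cancel₀ ht0.ne', one_smul, sub_smul]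
    abel
  rw [hyx]
  exact hK hp hx (by linarith) ht0.le (by ring)

end Ellipsoid

theorem mem_coneOver_of_le_abs_inner {K : Set E3} (hK : IsCompact K) {u v y : E3} {R δ b : ℝ}
    (hR : ∀ k ∈ K, |⟪k, u⟫| ≤ R) (hy : y ∈ K) (hδ : 0 < δ) (hyu : δ ≤ |⟪y, u⟫|)
    (hyv : 0 ≤ ⟪y, v⟫) (hyvb : R * ⟪y, v⟫ ≤ δ * b) :
    y ∈ coneOver {x ∈ frontier K | 0 ≤ ⟪x, v⟫ ∧ ⟪x, v⟫ ≤ b} := by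
  have hy0 : y ≠ 0 := by
    rintro rfl
    rw [inner_zero_left, abs_zero] at hyu
    linarith
  obtain ⟨τ, hτ, hτy⟩ := exists_one_le_smul_mem_frontier hK hy hy0
  have hτR : τ * δ ≤ R := calc
    τ * δ ≤ τ * |⟪y, u⟫| := by gcongr
    _ = |⟪τ • y, u⟫| := by rw [real_inner_smul_left, abs_mul, abs_of_nonneg (zero_le_one.trans hτ)]
    _ ≤ R := hR _ (hK.isClosed.frontier_subset hτy)
  refine mem_coneOver_of_one_le_smul_mem hτ ⟨hτy, ?_⟩
  rw [real_inner_smul_left]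
  refine ⟨by positivity, le_of_mul_le_mul_right ?_ hδ⟩
  nlinarith

theorem exists_inner_add_smul_sub_eq_zero {F : Type*} [NormedAddCommGroup F]
    [InnerProductSpace ℝ F] {p c v : F} (hp : ⟪p, v⟫ < 0) (hc : 0 ≤ ⟪c, v⟫) :
    ∃ t, 0 < t ∧ t ≤ 1 ∧ t * (⟪c, v⟫ - ⟪p, v⟫) = -⟪p, v⟫ ∧ ⟪p + t • (c - p), v⟫ = 0 := by
  have hden : 0 < ⟪c, v⟫ - ⟪p, v⟫ := by linarith
  have ht := div_mul_cancel₀ (-⟪p, v⟫) hden.ne'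
  refine ⟨-⟪p, v⟫ / (⟪c, v⟫ - ⟪p, v⟫), div_pos (by linarith) hden,
    (div_le_one hden).2 (by linarith), ht, ?_⟩
  rw [inner_add_left, real_inner_smul_left, inner_sub_left]
  linear_combination ht

theorem ofReal_le_volume_coneOver_of_box_subset {K : Set E3} (hK : IsCompact K)
    {e : Fin 3 → E3} (he : Orthonormal ℝ e) {ζ : E3} (hζ : ⟪ζ, e 2⟫ = 0) {s : Fin 3 → ℝ}
    (hs : ∀ i, 0 < s i) (hbox : ∀ y, (∀ i, |⟪y - ζ, e i⟫| ≤ s i) → y ∈ K) {R b : ℝ}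
    (hR0 : 0 < R) (hR : ∀ k ∈ K, |⟪k, e 0⟫| ≤ R) (hbs : s 0 * b ≤ 2 * R * s 2) :
    ENNReal.ofReal (s 0 ^ 2 * s 1 * b / (2 * R)) ≤
      volume (coneOver {x ∈ frontier K | 0 ≤ ⟪x, e 2⟫ ∧ ⟪x, e 2⟫ ≤ b}) := by
  obtain ⟨l, hl, hl_abs⟩ := exists_Icc_subset_Icc_le_abs ⟪ζ, e 0⟫ (half_pos (hs 0))
  have hh : s 0 * b / (2 * R) ≤ s 2 := by rwa [div_le_iff₀ (by positivity), mul_comm (s 2)]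
  let lo : Fin 3 → ℝ := ![l, ⟪ζ, e 1⟫ - s 1, 0]
  -- Rays through the box are stretched by a factor at most `2 R / s 0` before they leave `K`.
  let hi : Fin 3 → ℝ := ![l + s 0 / 2, ⟪ζ, e 1⟫ + s 1, s 0 * b / (2 * R)]
  have hsub : {y : E3 | ∀ i, ⟪y, e i⟫ ∈ Icc (lo i) (hi i)} ⊆
      coneOver {x ∈ frontier K | 0 ≤ ⟪x, e 2⟫ ∧ ⟪x, e 2⟫ ≤ b} := by
    intro y hy
    have hy0 : ⟪y, e 0⟫ ∈ Icc l (l + s 0 / 2) := hy 0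
    have hy1 : ⟪y, e 1⟫ ∈ Icc (⟪ζ, e 1⟫ - s 1) (⟪ζ, e 1⟫ + s 1) := hy 1
    have hy2 : ⟪y, e 2⟫ ∈ Icc 0 (s 0 * b / (2 * R)) := hy 2
    have hyK : y ∈ K := hbox y fun i => by
      rw [inner_sub_left, abs_sub_le_iff]
      fin_cases i <;> simp only [Fin.zero_eta, Fin.mk_one, Fin.reduceFinMk, Fin.isValue]
      · have := hl hy0
        constructor <;> linarith [this.1, this.2]
      · constructor <;> linarith [hy1.1, hy1.2]
      · rw [hζ]
        constructor <;> linarith [hy2.1, hy2.2]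
    refine mem_coneOver_of_le_abs_inner hK hR hyK (half_pos (hs 0)) (hl_abs _ hy0) hy2.1 ?_
    calc R * ⟪y, e 2⟫ ≤ R * (s 0 * b / (2 * R)) := by gcongr; exact hy2.2
      _ = s 0 / 2 * b := by field_simp
  calc ENNReal.ofReal (s 0 ^ 2 * s 1 * b / (2 * R))
      = volume {y : E3 | ∀ i, ⟪y, e i⟫ ∈ Icc (lo i) (hi i)} := by
        rw [he.volume_setOf_inner_mem_Icc (by simp) lo hi, Fin.prod_univ_three]
        simp only [lo, hi, Matrix.cons_val_zero, Matrix.cons_val_one, Matrix.cons_val_two,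
          Matrix.head_cons, Matrix.tail_cons, add_sub_cancel_left, sub_zero,
          add_sub_sub_cancel]
        rw [← ENNReal.ofReal_mul (by linarith [hs 0]),
          ← ENNReal.ofReal_mul (by nlinarith [hs 0, hs 1])]
        congr 1
        field_simp
        ring
    _ ≤ _ := measure_mono hsub

theorem IsEllipsoid.ofReal_le_volume_coneOver_of_inner_center_nonneg {K E : Set E3} {cc p : E3}
    {e : Fin 3 → E3} {r : Fin 3 → ℝ} {Λ κ : ℝ} (hconv : Convex ℝ K) (hcomp : IsCompact K)
    (h0 : 0 ∈ K) (hE : IsEllipsoid E cc e r) (hEK : E ⊆ K) (hKE : K ⊆ dilate cc Λ E)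
    (hΛ : 0 < Λ) (hκ : 0 < κ) (hcc : 0 ≤ ⟪cc, e 2⟫) (hp : p ∈ K)
    (hpκ : ⟪p, e 2⟫ ≤ -(κ * r 2)) :
    ENNReal.ofReal (κ ^ 4 / (864 * Λ ^ 4) * (r 0 * r 1 * r 2)) ≤
      volume (coneOver {x ∈ frontier K | 0 ≤ ⟪x, e 2⟫ ∧ ⟪x, e 2⟫ ≤ κ * r 2}) := by
  have hr := hE.1
  have hcc_le : ⟪cc, e 2⟫ ≤ Λ * r 2 := by
    have := hE.abs_inner_sub_le_of_mem_dilate_s7 hΛ.le (hKE h0) 2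
    rw [zero_sub, inner_neg_left, abs_neg] at this
    exact (abs_le.1 this).2
  have hbound : ∀ k ∈ K, ∀ i, |⟪k, e i⟫| ≤ 2 * Λ * r i := fun k hk =>
    hE.abs_inner_le_of_mem_dilate hΛ.le (hKE h0) (hKE hk)
  obtain ⟨t₀, rfl⟩ : ∃ t₀, κ = 3 * Λ * t₀ := ⟨κ / (3 * Λ), by field_simp⟩
  have ht₀ : 0 < t₀ := pos_of_mul_pos_right hκ (by positivity)
  obtain ⟨t, ht0, ht1, ht, hζ⟩ :=
    exists_inner_add_smul_sub_eq_zero (by linarith [mul_pos hκ (hr 2)]) hcc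
  have ht₀t : t₀ ≤ t := by
    have hden_le : ⟪cc, e 2⟫ - ⟪p, e 2⟫ ≤ 3 * (Λ * r 2) := by
      linarith [(abs_le.1 (hbound p hp 2)).1]
    nlinarith [mul_pos hΛ (hr 2)]
  have hnear : ∀ y, (∀ i, |⟪y - (p + t • (cc - p)), e i⟫| ≤ t₀ * r i / 2) → y ∈ K :=
    fun y hy => hconv.mem_of_abs_inner_sub_homothety_le hE hEK hp ht0 ht1 fun i =>
      (hy i).trans (by gcongr; exact (hr i).le)
  refine le_of_eq_of_le ?_ (ofReal_le_volume_coneOver_of_box_subset hcomp hE.2.1 hζ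
    (fun i => by positivity [hr i]) hnear (by positivity [hr 0]) (fun k hk => hbound k hk 0)
    (b := 3 * Λ * t₀ * r 2) ?_)
  · congr 1
    field_simp
    ring
  · nlinarith [mul_pos (mul_pos hΛ ht₀) (mul_pos (hr 0) (hr 2))]

theorem IsEllipsoid.ofReal_le_volume_coneOver_abs_inner_le {K E : Set E3} {cc p q : E3}
    {e : Fin 3 → E3} {r : Fin 3 → ℝ} {Λ κ : ℝ} (hconv : Convex ℝ K) (hcomp : IsCompact K)
    (h0 : 0 ∈ K) (hE : IsEllipsoid E cc e r) (hEK : E ⊆ K) (hKE : K ⊆ dilate cc Λ E)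
    (hΛ : 0 < Λ) (hκ : 0 < κ) (hp : p ∈ K) (hpκ : ⟪p, e 2⟫ ≤ -(κ * r 2)) (hq : q ∈ K)
    (hqκ : κ * r 2 ≤ ⟪q, e 2⟫) :
    ENNReal.ofReal (κ ^ 4 / (864 * Λ ^ 4) * (r 0 * r 1 * r 2)) ≤
      volume (coneOver {x ∈ frontier K | |⟪x, e 2⟫| ≤ κ * r 2}) := by
  rcases le_total 0 ⟪cc, e 2⟫ with hcc | hcc
  · refine (hE.ofReal_le_volume_coneOver_of_inner_center_nonneg hconv hcomp h0 hEK hKE hΛ hκ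
      hcc hp hpκ).trans (measure_mono (coneOver_mono ?_))
    rintro x ⟨hx, hx0, hxκ⟩
    exact ⟨hx, abs_le.2 ⟨by linarith [mul_pos hκ (hE.1 2)], hxκ⟩⟩
  · have hflip : ∀ x, ⟪x, Function.update e 2 (-e 2) 2⟫ = -⟪x, e 2⟫ := fun x => by
      rw [Function.update_self, inner_neg_right]
    refine ((hE.update_neg 2).ofReal_le_volume_coneOver_of_inner_center_nonneg hconv hcomp h0
      hEK hKE hΛ hκ (by rw [hflip]; linarith) hq (by rw [hflip]; linarith)).trans
      (measure_mono (coneOver_mono ?_))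
    rintro x ⟨hx, hx0, hxκ⟩
    rw [hflip] at hx0 hxκ
    exact ⟨hx, abs_le.2 ⟨by linarith, by linarith [mul_pos hκ (hE.1 2)]⟩⟩

theorem stmt7_general (c₀ lam' : ℝ) (hc₀ : c₀ ∈ Set.Ioo (0:ℝ) (1/3)) :
    ∃ c > 0, ∀ (K E : Set E3) (cc : E3) (e : Fin 3 → E3) (r : Fin 3 → ℝ),
      IsConvexBody K → 0 ∈ K →
      IsEllipsoid E cc e r → cc = centerOfMass K → IsJohnEllipsoid K E cc →
      r 0 ≤ r 1 → r 1 ≤ r 2 → lam' ≤ r 2 / r 1 →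
      min (⟪(0:E3), e 2⟫ - sInf ((fun y => ⟪y, e 2⟫) '' K))
          (sSup ((fun y => ⟪y, e 2⟫) '' K) - ⟪(0:E3), e 2⟫) ≥ c₀ * r 2 →
      ENNReal.ofReal (c * (r 0 * r 1 * r 2)) ≤
        volume (coneOver {x ∈ frontier K |
          min (⟪x, e 2⟫ - sInf ((fun y => ⟪y, e 2⟫) '' K))
              (sSup ((fun y => ⟪y, e 2⟫) '' K) - ⟪x, e 2⟫) ≥ (c₀ / 3) * r 2}) := by
  have hc₀0 := hc₀.1
  refine ⟨(2 * c₀ / 3) ^ 4 / (864 * ((3:ℝ) ^ ((3:ℝ) / 2)) ^ 4), by positivity, ?_⟩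
  rintro K E cc e r ⟨hconv, hcomp, -⟩ h0 hE - ⟨hEK, hKE⟩ - - - hband
  have hheight : ContinuousOn (fun y => ⟪y, e 2⟫) K := by fun_prop
  have hK0 : K.Nonempty := ⟨0, h0⟩
  obtain ⟨p, hp, hpm : ⟪p, e 2⟫ = _⟩ :=
    (hcomp.image_of_continuousOn hheight).sInf_mem (hK0.image _)
  obtain ⟨q, hq, hqM : ⟪q, e 2⟫ = _⟩ :=
    (hcomp.image_of_continuousOn hheight).sSup_mem (hK0.image _)
  simp only [inner_zero_left, ge_iff_le, le_min_iff] at hband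
  have hr2 := hE.1 2
  refine (hE.ofReal_le_volume_coneOver_abs_inner_le hconv hcomp h0 hEK hKE (by positivity)
    (by positivity : 0 < 2 * c₀ / 3) hp ?_ hq ?_).trans (measure_mono (coneOver_mono ?_))
  · rw [hpm]; nlinarith
  · rw [hqM]; nlinarith
  · rintro x ⟨hx, hxc⟩
    rw [abs_le] at hxc
    refine ⟨hx, ?_⟩
    simp only [ge_iff_le, le_min_iff]
    constructor <;> nlinarith

theorem stmt7 (c₀ lam' : ℝ) (hc₀ : c₀ ∈ Set.Ioo (0:ℝ) (1/3)) (hlam' : 1 ≤ lam') :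
    ∃ c > 0, ∀ (K E : Set E3) (cc : E3) (e : Fin 3 → E3) (r : Fin 3 → ℝ),
      IsConvexBody K → 0 ∈ K →
      IsEllipsoid E cc e r → cc = centerOfMass K → IsJohnEllipsoid K E cc →
      r 0 ≤ r 1 → r 1 ≤ r 2 → lam' ≤ r 2 / r 1 →
      min (⟪(0:E3), e 2⟫ - sInf ((fun y => ⟪y, e 2⟫) '' K))
          (sSup ((fun y => ⟪y, e 2⟫) '' K) - ⟪(0:E3), e 2⟫) ≥ c₀ * r 2 →
      ENNReal.ofReal (c * (r 0 * r 1 * r 2)) ≤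
        volume (coneOver {x ∈ frontier K |
          min (⟪x, e 2⟫ - sInf ((fun y => ⟪y, e 2⟫) '' K))
              (sSup ((fun y => ⟪y, e 2⟫) '' K) - ⟪x, e 2⟫) ≥ (c₀ / 3) * r 2}) :=
  stmt7_general c₀ lam' hc₀
end
end

section
/- There is an absolute constant C > 0 with the following property. Let K ⊂ ℝ³ be a convex body, e₁, e₂, e₃ an orthonormal basis, and suppose K ⊂ 3^{3/2}E for an ellipsoid E with principal radii r₁ ≤ r₂ ≤ r₃ along e₁, e₂, e₃. Let K' denote the orthogonal projection of K onto the e₂e₃-plane, let d > 0, and set G := {x ∈ ∂K : dist(x', ∂K') ≥ d}, where x' is the projection of x onto the e₂e₃-plane. Let F ⊂ S² be the set of all outer unit normals of K attained at points of G. Then the spherical Lebesgue measure of F satisfies H²(F) ≤ C (r₁/d)². -/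
open MeasureTheory Metric Set Filter
open scoped RealInnerProductSpace ENNReal NNReal Real

noncomputable section

/-- Orthogonal projection onto the plane spanned by `e 1` and `e 2` (the `e₂e₃`-plane). -/
def projPlane (e : Fin 3 → E3) (x : E3) : E3 := ⟪x, e 1⟫ • e 1 + ⟪x, e 2⟫ • e 2

/-!
Let `ν` be an outer normal of `K` at `x` with `dist(x', ∂K') ≥ d`, and let `ν'` be its component
in the plane of `e 1`, `e 2`. The point `x' + (d / 2) ν' / ‖ν'‖` still lies in `K'`, so it is the
shadow of some `z ∈ K`. Since `K` lies in a slab of half-width `3^{3/2} r 0` orthogonal to `e 0`,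
the supporting inequality `⟪ν, z - x⟫ ≤ 0` yields `(d / 2) ‖ν'‖ ≤ 2 · 3^{3/2} r 0`. Hence all
these normals lie within `t = 4 · 3^{3/2} r 0 / d` of the axis `±e 0`. The caps around `±e 0`
are the images of the disc of radius `t` under a `6`-Lipschitz graph chart, so their measure is
`O(t²)`. When `t` is large, the whole sphere, covered by six such caps, has measure `O(1) ≤ O(t²)`.
-/

theorem IsPreconnected.subset_of_disjoint_frontier {α : Type*} [TopologicalSpace α]
    {s t : Set α} (hs : IsPreconnected s) (hst : (s ∩ t).Nonempty)
    (hfr : Disjoint s (frontier t)) : s ⊆ t := by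
  have hcover : s ⊆ interior t ∪ (closure t)ᶜ := fun y hy => by
    by_cases hyt : y ∈ interior t
    · exact Or.inl hyt
    · exact Or.inr fun hcl => hfr.ne_of_mem hy ⟨hcl, hyt⟩ rfl
  obtain ⟨y, hys, hyt⟩ := hst
  have hyint : y ∈ interior t := by
    by_contra h
    exact hfr.ne_of_mem hys ⟨subset_closure hyt, h⟩ rfl
  exact (hs.subset_left_of_subset_union isOpen_interior isClosed_closure.isOpen_compl
    (disjoint_compl_right.mono_right (compl_subset_compl.2 interior_subset_closure))
    hcover ⟨y, hys, hyint⟩).trans interior_subset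

theorem mem_of_mem_affineSpan_of_dist_lt_infDist_intrinsicFrontier {V P : Type*}
    [NormedAddCommGroup V] [NormedSpace ℝ V] [MetricSpace P] [NormedAddTorsor V P]
    {s : Set P} {x p : P} (hx : x ∈ s) (hp : p ∈ affineSpan ℝ s)
    (hpx : dist p x < infDist x (intrinsicFrontier ℝ s)) : p ∈ s := by
  set A := affineSpan ℝ s
  let g : ℝ → A := fun t => ⟨AffineMap.lineMap x p t,
    AffineMap.lineMap_mem t (subset_affineSpan ℝ s hx) hp⟩
  have hg : Continuous g := (AffineMap.lineMap_continuous).subtype_mk _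
  have hseg : g '' Icc 0 1 ⊆ ((↑) ⁻¹' s : Set A) := by
    refine (isPreconnected_Icc.image g hg.continuousOn).subset_of_disjoint_frontier
      ⟨g 0, mem_image_of_mem g (left_mem_Icc.2 zero_le_one), by simpa [g] using hx⟩ ?_
    rw [Set.disjoint_left]
    rintro _ ⟨t, ht, rfl⟩ hfr
    have hle : infDist x (intrinsicFrontier ℝ s) ≤ dist x (AffineMap.lineMap x p t) :=
      infDist_le_dist_of_mem ⟨g t, hfr, rfl⟩
    have : dist x (AffineMap.lineMap x p t) ≤ dist p x := by
      rw [dist_left_lineMap, Real.norm_eq_abs, abs_of_nonneg ht.1, dist_comm]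
      exact mul_le_of_le_one_left dist_nonneg ht.2
    exact absurd (hle.trans this) (not_le.2 hpx)
  simpa [g] using hseg (mem_image_of_mem g (right_mem_Icc.2 zero_le_one))

section ProjPlane

variable {e : Fin 3 → E3}

def projPlaneₗ (e : Fin 3 → E3) : E3 →ₗ[ℝ] E3 where
  toFun := projPlane e
  map_add' x y := by simp only [projPlane, inner_add_left, add_smul]; abel
  map_smul' t x := by simp only [projPlane, real_inner_smul_left, smul_add, smul_smul]; rfl

@[simp] lemma coe_projPlaneₗ : ⇑(projPlaneₗ e) = projPlane e := rfl

lemma inner_projPlane_self (x : E3) : ⟪x, projPlane e x⟫ = ⟪x, e 1⟫ ^ 2 + ⟪x, e 2⟫ ^ 2 := by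
  simp only [projPlane, inner_add_right, real_inner_smul_right]; ring

variable (he : Orthonormal ℝ e)
include he

lemma projPlane_projPlane (x : E3) : projPlane e (projPlane e x) = projPlane e x := by
  simp [projPlane, inner_add_left, real_inner_smul_left, orthonormal_iff_ite.mp he, he.1 1, he.1 2]

lemma norm_projPlane_sq (x : E3) : ‖projPlane e x‖ ^ 2 = ⟪x, e 1⟫ ^ 2 + ⟪x, e 2⟫ ^ 2 := by
  rw [projPlane, norm_add_sq_real, real_inner_smul_left, real_inner_smul_right,
    he.2 (by decide : (1 : Fin 3) ≠ 2), norm_smul, norm_smul, he.1 1, he.1 2]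
  simp

lemma inner_smul_add_projPlane (x : E3) : ⟪x, e 0⟫ • e 0 + projPlane e x = x := by
  have hspan : ⊤ ≤ Submodule.span ℝ (Set.range e) :=
    (he.linearIndependent.span_eq_top_of_card_eq_finrank (by simp)).ge
  have h := (OrthonormalBasis.mk he hspan).sum_repr' x
  simp only [OrthonormalBasis.coe_mk, Fin.sum_univ_three] at h
  rw [projPlane, ← add_assoc]
  simpa only [real_inner_comm x] using h

lemma norm_sq_eq_inner_sq_add_norm_projPlane_sq (x : E3) :
    ‖x‖ ^ 2 = ⟪x, e 0⟫ ^ 2 + ‖projPlane e x‖ ^ 2 := by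
  calc ‖x‖ ^ 2 = ⟪x, ⟪x, e 0⟫ • e 0 + projPlane e x⟫ := by
        rw [inner_smul_add_projPlane he, real_inner_self_eq_norm_sq]
    _ = _ := by
        rw [inner_add_right, real_inner_smul_right, inner_projPlane_self, norm_projPlane_sq he]
        ring

end ProjPlane

lemma abs_inner_sub_center_le_of_mem_dilate {E : Set E3} {c : E3} {e : Fin 3 → E3}
    {r : Fin 3 → ℝ} (hE : IsEllipsoid E c e r) {s : ℝ} (hs : 0 ≤ s) {z : E3}
    (hz : z ∈ dilate c s E) (i : Fin 3) : |⟪z - c, e i⟫| ≤ s * r i := by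
  obtain ⟨y, hy, rfl⟩ := hz
  rw [add_sub_cancel_left, real_inner_smul_left, abs_mul, abs_of_nonneg hs]
  refine mul_le_mul_of_nonneg_left ?_ hs
  rw [hE.2.2] at hy
  have hi : (⟪y - c, e i⟫ / r i) ^ 2 ≤ 1 :=
    (Finset.single_le_sum (fun j _ => sq_nonneg (⟪y - c, e j⟫ / r j)) (Finset.mem_univ i)).trans hy
  rwa [sq_le_one_iff_abs_le_one, abs_div, abs_of_pos (hE.1 i), div_le_one (hE.1 i)] at hi

section Tilt

variable {e : Fin 3 → E3}

lemma mem_affineSpan_image_projPlane {K : Set E3} (hK : (interior K).Nonempty) {p : E3}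
    (hp : projPlane e p = p) : p ∈ affineSpan ℝ (projPlane e '' K) := by
  have hspan : affineSpan ℝ K = ⊤ :=
    top_unique ((isOpen_interior.affineSpan_eq_top hK).ge.trans (affineSpan_mono ℝ interior_subset))
  rw [← hp, ← coe_projPlaneₗ, ← LinearMap.coe_toAffineMap, ← AffineSubspace.map_span, hspan]
  exact AffineSubspace.mem_map.2 ⟨p, AffineSubspace.mem_top ℝ E3 p, rfl⟩

lemma mem_image_projPlane_of_dist_lt {K : Set E3} (hK : (interior K).Nonempty) {x : E3}
    (hx : x ∈ K) {d : ℝ}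
    (hd : d ≤ infDist (projPlane e x) (intrinsicFrontier ℝ (projPlane e '' K))) {p : E3}
    (hp : projPlane e p = p) (hpx : dist p (projPlane e x) < d) : p ∈ projPlane e '' K :=
  mem_of_mem_affineSpan_of_dist_lt_infDist_intrinsicFrontier (mem_image_of_mem _ hx)
    (mem_affineSpan_image_projPlane hK hp) (hpx.trans_le hd)

lemma mul_norm_projPlane_le (he : Orthonormal ℝ e) {K : Set E3} {c x ν : E3} {d w : ℝ}
    (hd : 0 < d) (hxK : x ∈ K) (hν : outerNormalAt K x ν)
    (hslab : ∀ z ∈ K, |⟪z - c, e 0⟫| ≤ w)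
    (hdisc : ∀ p, projPlane e p = p → dist p (projPlane e x) < d → p ∈ projPlane e '' K) :
    d * ‖projPlane e ν‖ ≤ 4 * w := by
  rcases (norm_nonneg (projPlane e ν)).eq_or_lt with hn | hn
  · rw [← hn, mul_zero]
    linarith [hslab x hxK, abs_nonneg ⟪x - c, e 0⟫]
  set n := ‖projPlane e ν‖ with hn_def
  set p := projPlane e x + (d / 2 / n) • projPlane e ν
  have hp : projPlane e p = p := by
    simp only [p, ← coe_projPlaneₗ, map_add, map_smul]
    simp only [coe_projPlaneₗ, projPlane_projPlane he]
  have hpx : dist p (projPlane e x) < d := by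
    rw [dist_eq_norm, add_sub_cancel_left, norm_smul, Real.norm_of_nonneg (by positivity),
      div_mul_cancel₀ _ hn.ne']
    exact half_lt_self hd
  obtain ⟨z, hzK, hz⟩ := hdisc p hp hpx
  have hzx : z - x = ⟪z - x, e 0⟫ • e 0 + (d / 2 / n) • projPlane e ν := by
    conv_lhs => rw [← inner_smul_add_projPlane he (z - x)]
    rw [← coe_projPlaneₗ, map_sub, coe_projPlaneₗ, hz, add_sub_cancel_left]
  have hsupp : ⟪ν, z - x⟫ = ⟪z - x, e 0⟫ * ⟪ν, e 0⟫ + d / 2 * n := by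
    conv_lhs => rw [hzx]
    rw [inner_add_right, real_inner_smul_right, real_inner_smul_right, inner_projPlane_self,
      ← norm_projPlane_sq he, ← hn_def]
    field_simp
  have hν0 : |⟪ν, e 0⟫| ≤ 1 :=
    (abs_real_inner_le_norm ν (e 0)).trans (by rw [hν.1, he.1 0, one_mul])
  have hwidth : |⟪z - x, e 0⟫| ≤ 2 * w := by
    rw [show z - x = (z - c) - (x - c) by abel, inner_sub_left, two_mul]
    exact (abs_sub _ _).trans (add_le_add (hslab z hzK) (hslab x hxK))
  have hprod : |⟪z - x, e 0⟫ * ⟪ν, e 0⟫| ≤ 2 * w := by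
    rw [abs_mul]
    exact (mul_le_of_le_one_right (abs_nonneg _) hν0).trans hwidth
  linarith [hν.2 z hzK, neg_abs_le (⟪z - x, e 0⟫ * ⟪ν, e 0⟫)]

end Tilt

def sphereCap (f : Fin 3 → E3) (ρ : ℝ) : Set E3 :=
  {ν | ‖ν‖ = 1 ∧ ‖projPlane f ν‖ ≤ ρ ∧ 0 ≤ ⟪ν, f 0⟫}

def capChart (f : Fin 3 → E3) (p : Fin 2 → ℝ) : E3 :=
  p 0 • f 1 + p 1 • f 2 + √(1 - p 0 ^ 2 - p 1 ^ 2) • f 0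

section Cap

variable {f : Fin 3 → E3}

lemma sphereCap_subset_image_capChart (hf : Orthonormal ℝ f) (ρ : ℝ) :
    sphereCap f ρ ⊆ capChart f '' {p | p 0 ^ 2 + p 1 ^ 2 ≤ ρ ^ 2} := by
  rintro ν ⟨hν, hνρ, hν0⟩
  have hsq := norm_projPlane_sq hf ν
  refine ⟨![⟪ν, f 1⟫, ⟪ν, f 2⟫], ?_, ?_⟩
  · simpa [← hsq] using pow_le_pow_left₀ (norm_nonneg _) hνρ 2
  · have hheight : 1 - ⟪ν, f 1⟫ ^ 2 - ⟪ν, f 2⟫ ^ 2 = ⟪ν, f 0⟫ ^ 2 := by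
      have h := norm_sq_eq_inner_sq_add_norm_projPlane_sq hf ν
      rw [hν, one_pow, hsq] at h
      linarith
    simp only [capChart, Matrix.cons_val_zero, Matrix.cons_val_one, hheight, Real.sqrt_sq hν0]
    conv_rhs => rw [← inner_smul_add_projPlane hf ν]
    rw [projPlane]
    abel

lemma abs_sqrt_sub_sqrt_le {a b : ℝ} (ha : 1 / 4 ≤ a) (hb : 1 / 4 ≤ b) :
    |√a - √b| ≤ |a - b| := by
  have hsa : 1 / 2 ≤ √a := Real.le_sqrt_of_sq_le (by linarith)
  have hsb : 1 / 2 ≤ √b := Real.le_sqrt_of_sq_le (by linarith)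
  have hprod : |a - b| = |√a - √b| * (√a + √b) := by
    rw [← abs_of_pos (by linarith : 0 < √a + √b), ← abs_mul]
    congr 1
    calc a - b = √a ^ 2 - √b ^ 2 := by rw [Real.sq_sqrt (by linarith), Real.sq_sqrt (by linarith)]
      _ = _ := by ring
  nlinarith [abs_nonneg (√a - √b)]

lemma lipschitzOnWith_capChart (hf : Orthonormal ℝ f) :
    LipschitzOnWith 6 (capChart f) {p | p 0 ^ 2 + p 1 ^ 2 ≤ 2 / 3} := by
  refine LipschitzOnWith.of_dist_le_mul fun p hp q hq => ?_
  simp only [mem_ofPred_eq] at hp hq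
  have hunit : ∀ v : Fin 2 → ℝ, v 0 ^ 2 + v 1 ^ 2 ≤ 2 / 3 → ∀ i, |v i| ≤ 1 := fun v hv =>
    Fin.forall_fin_two.2 ⟨(sq_le_one_iff_abs_le_one _).1 (by nlinarith [sq_nonneg (v 1)]),
      (sq_le_one_iff_abs_le_one _).1 (by nlinarith [sq_nonneg (v 0)])⟩
  set D := dist p q
  have hcoord : ∀ i, |p i - q i| ≤ D := fun i => by
    simpa only [Real.dist_eq] using dist_le_pi_dist p q i
  have hbound : ∀ i, |p i + q i| ≤ 2 := fun i =>
    (abs_add_le _ _).trans (by linarith [hunit p hp i, hunit q hq i])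
  have hheight : |(1 - p 0 ^ 2 - p 1 ^ 2) - (1 - q 0 ^ 2 - q 1 ^ 2)| ≤ 4 * D := by
    calc _ = |(q 0 - p 0) * (p 0 + q 0) + (q 1 - p 1) * (p 1 + q 1)| := by ring_nf
      _ ≤ |p 0 - q 0| * |p 0 + q 0| + |p 1 - q 1| * |p 1 + q 1| := by
        rw [abs_sub_comm (p 0), abs_sub_comm (p 1), ← abs_mul, ← abs_mul]
        exact abs_add_le _ _
      _ ≤ D * 2 + D * 2 := by
        gcongr
        exacts [hcoord 0, hbound 0, hcoord 1, hbound 1]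
      _ = 4 * D := by ring
  have hsqrt := (abs_sqrt_sub_sqrt_le (a := 1 - p 0 ^ 2 - p 1 ^ 2) (b := 1 - q 0 ^ 2 - q 1 ^ 2)
    (by linarith) (by linarith)).trans hheight
  have hdiff : capChart f p - capChart f q = (p 0 - q 0) • f 1 + (p 1 - q 1) • f 2
      + (√(1 - p 0 ^ 2 - p 1 ^ 2) - √(1 - q 0 ^ 2 - q 1 ^ 2)) • f 0 := by
    simp only [capChart, sub_smul]
    abel
  rw [dist_eq_norm, hdiff]
  refine (norm_add₃_le ..).trans ?_
  simp only [norm_smul, hf.1, mul_one, Real.norm_eq_abs, NNReal.coe_ofNat]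
  linarith [hcoord 0, hcoord 1]

lemma hausdorffMeasure_sphereCap_le (hf : Orthonormal ℝ f) {ρ : ℝ} (hρ0 : 0 ≤ ρ)
    (hρ : ρ ^ 2 ≤ 2 / 3) : μH[2] (sphereCap f ρ) ≤ ENNReal.ofReal (144 * ρ ^ 2) := by
  set s : Set (Fin 2 → ℝ) := {p | p 0 ^ 2 + p 1 ^ 2 ≤ ρ ^ 2}
  have hlip : LipschitzOnWith 6 (capChart f) s :=
    (lipschitzOnWith_capChart hf).mono fun p (hp : _ ≤ _) => hp.trans hρ
  have hs : μH[2] s ≤ ENNReal.ofReal (4 * ρ ^ 2) := by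
    have hball : s ⊆ closedBall 0 ρ := fun p hp => by
      replace hp : p 0 ^ 2 + p 1 ^ 2 ≤ ρ ^ 2 := hp
      refine (dist_pi_le_iff hρ0).2 (Fin.forall_fin_two.2 ⟨?_, ?_⟩) <;>
        rw [Real.dist_eq, Pi.zero_apply, sub_zero] <;>
        exact abs_le_of_sq_le_sq (by nlinarith [sq_nonneg (p 0), sq_nonneg (p 1)]) hρ0
    have hvol : (μH[2] : Measure (Fin 2 → ℝ)) = volume := by
      simpa using hausdorffMeasure_pi_real (ι := Fin 2)
    rw [hvol]
    calc volume s ≤ volume (closedBall (0 : Fin 2 → ℝ) ρ) := measure_mono hball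
      _ = ENNReal.ofReal (4 * ρ ^ 2) := by
        rw [Real.volume_pi_closedBall 0 hρ0, Fintype.card_fin]
        ring_nf
  calc μH[2] (sphereCap f ρ) ≤ μH[2] (capChart f '' s) :=
        measure_mono (sphereCap_subset_image_capChart hf ρ)
    _ ≤ (6 : ℝ≥0) ^ (2 : ℝ) * μH[2] s := hlip.hausdorffMeasure_image_le (by norm_num)
    _ ≤ (6 : ℝ≥0) ^ (2 : ℝ) * ENNReal.ofReal (4 * ρ ^ 2) := by gcongr
    _ = ENNReal.ofReal (144 * ρ ^ 2) := by
        rw [show (144 * ρ ^ 2) = 36 * (4 * ρ ^ 2) by ring, ENNReal.ofReal_mul (by norm_num)]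
        norm_num

end Cap

def signedFrame (e : Fin 3 → E3) (i : Fin 3) (s : Bool) : Fin 3 → E3 :=
  ![cond s (e i) (-e i), e (i + 1), e (i + 2)]

section Sphere

variable {e : Fin 3 → E3}

lemma orthonormal_signedFrame (he : Orthonormal ℝ e) (i : Fin 3) (s : Bool) :
    Orthonormal ℝ (signedFrame e i s) := by
  have hinj : Function.Injective ![i, i + 1, i + 2] := by fin_cases i <;> decide
  refine (he.comp _ hinj).orthonormal_of_forall_eq_or_eq_neg fun j => ?_
  fin_cases j <;> cases s <;> simp [signedFrame]

lemma projPlane_signedFrame_zero (s : Bool) : projPlane (signedFrame e 0 s) = projPlane e := by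
  ext1 ν
  simp [projPlane, signedFrame]

lemma sphere_subset_iUnion_sphereCap (he : Orthonormal ℝ e) :
    sphere (0 : E3) 1 ⊆ ⋃ q : Fin 3 × Bool, sphereCap (signedFrame e q.1 q.2) √(2 / 3) := by
  intro ν hν
  rw [mem_sphere_zero_iff_norm] at hν
  have hparseval : ⟪ν, e 0⟫ ^ 2 + ⟪ν, e 1⟫ ^ 2 + ⟪ν, e 2⟫ ^ 2 = 1 := by
    have h := norm_sq_eq_inner_sq_add_norm_projPlane_sq he ν
    rw [hν, norm_projPlane_sq he] at h
    linarith
  obtain ⟨i, hi⟩ : ∃ i, 1 / 3 ≤ ⟪ν, e i⟫ ^ 2 := by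
    by_contra! h
    linarith [h 0, h 1, h 2]
  obtain ⟨s, hs⟩ : ∃ s, ⟪ν, signedFrame e i s 0⟫ = |⟪ν, e i⟫| := by
    rcases abs_choice ⟪ν, e i⟫ with h | h
    · exact ⟨true, by simp [signedFrame, h]⟩
    · exact ⟨false, by simp [signedFrame, h]⟩
  refine mem_iUnion.2 ⟨(i, s), hν, Real.le_sqrt_of_sq_le ?_, hs ▸ abs_nonneg _⟩
  have h := norm_sq_eq_inner_sq_add_norm_projPlane_sq (orthonormal_signedFrame he i s) ν
  rw [hν, hs, sq_abs] at h
  linarith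

lemma hausdorffMeasure_sphere_le : μH[2] (sphere (0 : E3) 1) ≤ ENNReal.ofReal 576 := by
  set b := EuclideanSpace.basisFun (Fin 3) ℝ
  have he := b.orthonormal
  have hcap : ∀ q : Fin 3 × Bool,
      μH[2] (sphereCap (signedFrame b q.1 q.2) √(2 / 3)) ≤ ENNReal.ofReal 96 := fun q => by
    refine (hausdorffMeasure_sphereCap_le (orthonormal_signedFrame he q.1 q.2) (Real.sqrt_nonneg _)
      (Real.sq_sqrt (by norm_num)).le).trans_eq ?_
    rw [Real.sq_sqrt (by norm_num)]
    norm_num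
  calc μH[2] (sphere (0 : E3) 1)
      ≤ ∑ q : Fin 3 × Bool, μH[2] (sphereCap (signedFrame b q.1 q.2) √(2 / 3)) :=
        (measure_mono (sphere_subset_iUnion_sphereCap he)).trans (measure_iUnion_fintype_le _ _)
    _ ≤ ∑ _q : Fin 3 × Bool, ENNReal.ofReal 96 := Finset.sum_le_sum fun q _ => hcap q
    _ = ENNReal.ofReal 576 := by
        rw [Finset.sum_const, Finset.card_univ, Fintype.card_prod, Fintype.card_fin,
          Fintype.card_bool, nsmul_eq_mul, ← ENNReal.ofReal_natCast,
          ← ENNReal.ofReal_mul (by norm_num)]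
        norm_num

lemma hausdorffMeasure_setOf_norm_projPlane_le (he : Orthonormal ℝ e) {t : ℝ} (ht : 0 ≤ t) :
    μH[2] {ν : E3 | ‖ν‖ = 1 ∧ ‖projPlane e ν‖ ≤ t} ≤ ENNReal.ofReal (864 * t ^ 2) := by
  rcases le_or_gt (t ^ 2) (2 / 3) with hsmall | hlarge
  · have hsub : {ν : E3 | ‖ν‖ = 1 ∧ ‖projPlane e ν‖ ≤ t}
        ⊆ ⋃ s : Bool, sphereCap (signedFrame e 0 s) t := by
      rintro ν ⟨hν, hνt⟩
      rcases le_total 0 ⟪ν, e 0⟫ with h | h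
      · exact mem_iUnion.2 ⟨true, hν, by rwa [projPlane_signedFrame_zero], by simpa [signedFrame]⟩
      · exact mem_iUnion.2 ⟨false, hν, by rwa [projPlane_signedFrame_zero], by simpa [signedFrame]⟩
    calc _ ≤ ∑ s : Bool, μH[2] (sphereCap (signedFrame e 0 s) t) :=
          (measure_mono hsub).trans (measure_iUnion_fintype_le _ _)
      _ ≤ ∑ _s : Bool, ENNReal.ofReal (144 * t ^ 2) :=
          Finset.sum_le_sum fun s _ =>
            hausdorffMeasure_sphereCap_le (orthonormal_signedFrame he 0 s) ht hsmall
      _ = ENNReal.ofReal (288 * t ^ 2) := by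
          rw [Fintype.sum_bool, ← ENNReal.ofReal_add (by positivity) (by positivity)]
          ring_nf
      _ ≤ ENNReal.ofReal (864 * t ^ 2) := ENNReal.ofReal_le_ofReal (by nlinarith)
  · calc _ ≤ μH[2] (sphere (0 : E3) 1) := measure_mono fun ν hν => mem_sphere_zero_iff_norm.2 hν.1
      _ ≤ ENNReal.ofReal 576 := hausdorffMeasure_sphere_le
      _ ≤ ENNReal.ofReal (864 * t ^ 2) := ENNReal.ofReal_le_ofReal (by linarith)

end Sphere

theorem stmt9 :
    ∃ C > 0, ∀ (K E : Set E3) (c : E3) (e : Fin 3 → E3) (r : Fin 3 → ℝ) (d : ℝ),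
      IsConvexBody K → IsEllipsoid E c e r → r 0 ≤ r 1 → r 1 ≤ r 2 →
      K ⊆ dilate c ((3:ℝ) ^ ((3:ℝ) / 2)) E → 0 < d →
      μH[2] {ν : E3 | ν ∈ unitSphere ∧ ∃ x ∈ frontier K,
          Metric.infDist (projPlane e x) (intrinsicFrontier ℝ (projPlane e '' K)) ≥ d ∧
          outerNormalAt K x ν} ≤
        ENNReal.ofReal (C * (r 0 / d) ^ 2) := by
  refine ⟨373248, by norm_num, fun K E c e r d hK hE _ _ hKE hd => ?_⟩
  set β : ℝ := 3 ^ ((3 : ℝ) / 2)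
  have hβ : 0 ≤ β := by positivity
  have hβsq : β ^ 2 = 27 := by
    rw [← Real.rpow_natCast, ← Real.rpow_mul (by norm_num)]
    norm_num
  have hslab : ∀ z ∈ K, |⟪z - c, e 0⟫| ≤ β * r 0 := fun z hz =>
    abs_inner_sub_center_le_of_mem_dilate hE hβ (hKE hz) 0
  have hnormals : {ν : E3 | ν ∈ unitSphere ∧ ∃ x ∈ frontier K,
      Metric.infDist (projPlane e x) (intrinsicFrontier ℝ (projPlane e '' K)) ≥ d ∧
      outerNormalAt K x ν} ⊆ {ν | ‖ν‖ = 1 ∧ ‖projPlane e ν‖ ≤ 4 * (β * r 0) / d} := by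
    rintro ν ⟨-, x, hx, hxd, hν⟩
    have hxK : x ∈ K := hK.2.1.isClosed.frontier_subset hx
    refine ⟨hν.1, (le_div_iff₀ hd).2 ?_⟩
    rw [mul_comm]
    exact mul_norm_projPlane_le hE.2.1 hd hxK hν hslab fun p hp hpx =>
      mem_image_projPlane_of_dist_lt hK.2.2 hxK hxd hp hpx
  refine (measure_mono hnormals).trans
    ((hausdorffMeasure_setOf_norm_projPlane_le hE.2.1 (by have := hE.1 0; positivity)).trans_eq ?_)
  congr 1
  rw [div_pow, mul_pow, mul_pow, hβsq, div_pow]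
  ring
end
end

section
/- For every n ≥ 1 and C ≥ 1 there exists C₁ ≥ 1 depending only on n and C such that: if A and B are symmetric positive definite n×n real matrices with (1/C)·I ≤ A ≤ C·I and (1/C)·I ≤ B ≤ C·I (in the sense of quadratic forms), then the matrix D := ∫₀¹ cof((1−t)B + tA) dt is symmetric and satisfies (1/C₁)·I ≤ D ≤ C₁·I. -/
/-!
Along the segment `M t = (1 - t) • B + t • A` every matrix is symmetric with spectrum in
`[C⁻¹, C]`, since the Loewner interval `[C⁻¹ • 1, C • 1]` is convex. For such a matrix the
cofactor matrix is the adjugate `det M • M⁻¹ = cfc (fun x ↦ det M * x⁻¹) M`; as `det M` is the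
product of the eigenvalues, this lies between `C⁻¹ ^ n / C` and `C ^ n / C⁻¹`, so
`C₁ = C ^ (n + 1)` works. Integration over
`[0, 1]` preserves these Loewner bounds, because quadratic forms commute with the entrywise
integral.
-/

open scoped BigOperators

noncomputable section

/-- The cofactor matrix of `M`, whose `(i,j)` entry is `∂(det)/∂M_{ij}`; it satisfies
`(cof M)^T * M = det M • 1`, i.e. `cof M = (adjugate M)^T`. -/
def cof {n : ℕ} (M : Matrix (Fin n) (Fin n) ℝ) : Matrix (Fin n) (Fin n) ℝ :=
  (Matrix.adjugate M).transpose

/-- `P ≤ Q` for symmetric matrices, in the sense of quadratic forms. -/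
def MatLE {n : ℕ} (P Q : Matrix (Fin n) (Fin n) ℝ) : Prop := (Q - P).PosSemidef

open scoped MatrixOrder

namespace Matrix

def entrywiseIntegral {m n : Type*} (F : ℝ → Matrix m n ℝ) (a b : ℝ) : Matrix m n ℝ :=
  of fun i j ↦ ∫ t in a..b, F t i j

section EntrywiseIntegral

variable {m n : Type*} {F G : ℝ → Matrix m n ℝ} {a b : ℝ}

lemma entrywiseIntegral_sub (hF : Continuous F) (hG : Continuous G) :
    entrywiseIntegral (fun t ↦ F t - G t) a b =
      entrywiseIntegral F a b - entrywiseIntegral G a b := by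
  ext i j
  exact intervalIntegral.integral_sub
    ((by fun_prop : Continuous fun t ↦ F t i j).intervalIntegrable _ _)
    ((by fun_prop : Continuous fun t ↦ G t i j).intervalIntegrable _ _)

lemma entrywiseIntegral_const (P : Matrix m n ℝ) :
    entrywiseIntegral (fun _ ↦ P) a b = (b - a) • P := by
  ext i j
  simp [entrywiseIntegral]

end EntrywiseIntegral

section SquareEntrywiseIntegral

variable {n : Type*} {F G : ℝ → Matrix n n ℝ} {a b : ℝ}

lemma isHermitian_entrywiseIntegral (hF : ∀ t ∈ Set.uIcc a b, (F t).IsHermitian) :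
    (entrywiseIntegral F a b).IsHermitian := by
  ext i j
  simp only [conjTranspose_apply, star_trivial, entrywiseIntegral, of_apply]
  exact intervalIntegral.integral_congr fun t ht ↦ (hF t ht).apply i j

variable [Fintype n]

lemma dotProduct_entrywiseIntegral_mulVec (hF : Continuous F) (x : n → ℝ) :
    x ⬝ᵥ entrywiseIntegral F a b *ᵥ x = ∫ t in a..b, x ⬝ᵥ F t *ᵥ x := by
  simp only [dotProduct, mulVec, entrywiseIntegral, of_apply]
  rw [intervalIntegral.integral_finsetSum fun i _ ↦
    (by fun_prop : Continuous fun t ↦ x i * ∑ j, F t i j * x j).intervalIntegrable _ _]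
  refine Finset.sum_congr rfl fun i _ ↦ ?_
  rw [intervalIntegral.integral_const_mul, intervalIntegral.integral_finsetSum fun j _ ↦
    (by fun_prop : Continuous fun t ↦ F t i j * x j).intervalIntegrable _ _]
  simp only [intervalIntegral.integral_mul_const]

lemma posSemidef_entrywiseIntegral (hab : a ≤ b) (hF : Continuous F)
    (hpos : ∀ t ∈ Set.Icc a b, (F t).PosSemidef) : (entrywiseIntegral F a b).PosSemidef := by
  refine .of_dotProduct_mulVec_nonneg
    (isHermitian_entrywiseIntegral fun t ht ↦ (hpos t (Set.uIcc_of_le hab ▸ ht)).isHermitian)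
    fun x ↦ ?_
  rw [star_trivial, dotProduct_entrywiseIntegral_mulVec hF]
  exact intervalIntegral.integral_nonneg hab fun t ht ↦ by
    simpa using (hpos t ht).dotProduct_mulVec_nonneg x

lemma entrywiseIntegral_mono_on (hab : a ≤ b) (hF : Continuous F) (hG : Continuous G)
    (hFG : ∀ t ∈ Set.Icc a b, F t ≤ G t) : entrywiseIntegral F a b ≤ entrywiseIntegral G a b := by
  rw [le_iff, ← entrywiseIntegral_sub hG hF]
  exact posSemidef_entrywiseIntegral hab (hG.sub hF) hFG

lemma entrywiseIntegral_mem_Icc (hab : a ≤ b) (hF : Continuous F) {P Q : Matrix n n ℝ}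
    (hPQ : ∀ t ∈ Set.Icc a b, F t ∈ Set.Icc P Q) :
    entrywiseIntegral F a b ∈ Set.Icc ((b - a) • P) ((b - a) • Q) := by
  rw [← entrywiseIntegral_const, ← entrywiseIntegral_const]
  exact ⟨entrywiseIntegral_mono_on hab continuous_const hF fun t ht ↦ (hPQ t ht).1,
    entrywiseIntegral_mono_on hab hF continuous_const fun t ht ↦ (hPQ t ht).2⟩

end SquareEntrywiseIntegral

variable {n : Type*} [Fintype n] [DecidableEq n]

lemma IsHermitian.spectrum_subset_Icc {M : Matrix n n ℝ} (hM : M.IsHermitian) {c d : ℝ}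
    (hM' : M ∈ Set.Icc (c • 1) (d • 1)) : spectrum ℝ M ⊆ Set.Icc c d := by
  rw [← Algebra.algebraMap_eq_smul_one, ← Algebra.algebraMap_eq_smul_one] at hM'
  exact fun x hx ↦ ⟨(algebraMap_le_iff_le_spectrum (a := M) hM).mp hM'.1 x hx,
    (le_algebraMap_iff_spectrum_le (a := M) hM).mp hM'.2 x hx⟩

lemma IsHermitian.det_mem_Icc {M : Matrix n n ℝ} (hM : M.IsHermitian) {c d : ℝ} (hc : 0 ≤ c)
    (hspec : spectrum ℝ M ⊆ Set.Icc c d) :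
    M.det ∈ Set.Icc (c ^ Fintype.card n) (d ^ Fintype.card n) := by
  have hμ i : hM.eigenvalues i ∈ Set.Icc c d := hspec (hM.eigenvalues_mem_spectrum_real i)
  have hlo := Finset.prod_le_prod (s := .univ) (fun _ _ ↦ hc) fun i _ ↦ (hμ i).1
  have hhi := Finset.prod_le_prod (s := .univ) (fun i _ ↦ hc.trans (hμ i).1) fun i _ ↦ (hμ i).2
  rw [Finset.prod_const, Finset.card_univ] at hlo hhi
  rw [hM.det_eq_prod_eigenvalues]
  exact ⟨by simpa using hlo, by simpa using hhi⟩

lemma IsHermitian.adjugate_eq_cfc {M : Matrix n n ℝ} (hM : M.IsHermitian) (hunit : IsUnit M) :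
    M.adjugate = cfc (fun x ↦ M.det * x⁻¹) M := by
  have hinv : ContinuousOn (·⁻¹) (spectrum ℝ M) :=
    continuousOn_inv₀.mono fun x hx h0 ↦ spectrum.zero_notMem ℝ hunit (h0 ▸ hx)
  calc M.adjugate = M.det • M⁻¹ := by
        rw [inv_def, smul_smul, Ring.mul_inverse_cancel _ ((isUnit_iff_isUnit_det M).mp hunit),
          one_smul]
    _ = M.det • cfc (·⁻¹) M := by
        rw [nonsing_inv_eq_ringInverse]
        exact congrArg _ (cfc_ringInverse_id (R := ℝ) M hunit hM).symm
    _ = cfc (fun x ↦ M.det * x⁻¹) M := (cfc_const_mul _ _ _ hinv).symm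

lemma IsHermitian.adjugate_mem_Icc {M : Matrix n n ℝ} (hM : M.IsHermitian) {c d : ℝ}
    (hc : 0 < c) (hM' : M ∈ Set.Icc (c • 1) (d • 1)) :
    M.adjugate ∈ Set.Icc ((c ^ Fintype.card n / d) • 1) ((d ^ Fintype.card n / c) • 1) := by
  have hspec := hM.spectrum_subset_Icc hM'
  have hdet := hM.det_mem_Icc hc.le hspec
  have hunit : IsUnit M :=
    (isUnit_iff_isUnit_det M).mpr (pow_pos hc _ |>.trans_le hdet.1).ne'.isUnit
  have hcont : ContinuousOn (fun x ↦ M.det * x⁻¹) (spectrum ℝ M) :=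
    continuousOn_const.mul (continuousOn_inv₀.mono fun x hx ↦ (hc.trans_le (hspec hx).1).ne')
  rw [hM.adjugate_eq_cfc hunit, ← Algebra.algebraMap_eq_smul_one,
    ← Algebra.algebraMap_eq_smul_one]
  refine ⟨(algebraMap_le_cfc_iff _ _ M hcont hM).mpr fun x hx ↦ ?_,
    (cfc_le_algebraMap_iff _ _ M hcont hM).mpr fun x hx ↦ ?_⟩ <;>
    obtain ⟨hcx, hxd⟩ := hspec hx <;> rw [← div_eq_mul_inv]
  · exact div_le_div₀ (pow_pos hc _ |>.trans_le hdet.1).le hdet.1 (hc.trans_le hcx) hxd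
  · exact div_le_div₀ (pow_nonneg (hc.le.trans (hcx.trans hxd)) _) hdet.2 hc hcx

end Matrix

theorem cof_eq_adjugate {n : ℕ} {M : Matrix (Fin n) (Fin n) ℝ} (hM : M.IsSymm) :
    cof M = M.adjugate := by
  rw [cof, Matrix.adjugate_transpose, hM.eq]

theorem cof_mem_Icc {n : ℕ} {M : Matrix (Fin n) (Fin n) ℝ} (hM : M.IsSymm) {C : ℝ} (hC : 0 < C)
    (hM' : M ∈ Set.Icc (C⁻¹ • 1) (C • 1)) :
    cof M ∈ Set.Icc ((C ^ (n + 1))⁻¹ • 1) (C ^ (n + 1) • 1) := by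
  have h := (Matrix.isHermitian_iff_isSymm.mpr hM).adjugate_mem_Icc (inv_pos.mpr hC) hM'
  rwa [Fintype.card_fin, div_inv_eq_mul, ← pow_succ, inv_pow, div_eq_mul_inv, ← mul_inv,
    ← pow_succ, ← cof_eq_adjugate hM] at h

theorem stmt13_general (n : ℕ) (C : ℝ) (hC : 1 ≤ C) :
    ∃ C₁ : ℝ, 1 ≤ C₁ ∧ ∀ A B : Matrix (Fin n) (Fin n) ℝ,
      A.PosDef → B.PosDef → A.IsSymm → B.IsSymm →
      MatLE (C⁻¹ • (1 : Matrix (Fin n) (Fin n) ℝ)) A →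
      MatLE A (C • (1 : Matrix (Fin n) (Fin n) ℝ)) →
      MatLE (C⁻¹ • (1 : Matrix (Fin n) (Fin n) ℝ)) B →
      MatLE B (C • (1 : Matrix (Fin n) (Fin n) ℝ)) →
      (Matrix.of fun i j => ∫ t in (0:ℝ)..1, cof ((1 - t) • B + t • A) i j).IsSymm ∧
      MatLE (C₁⁻¹ • (1 : Matrix (Fin n) (Fin n) ℝ))
        (Matrix.of fun i j => ∫ t in (0:ℝ)..1, cof ((1 - t) • B + t • A) i j) ∧
      MatLE (Matrix.of fun i j => ∫ t in (0:ℝ)..1, cof ((1 - t) • B + t • A) i j)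
        (C₁ • (1 : Matrix (Fin n) (Fin n) ℝ)) := by
  refine ⟨C ^ (n + 1), one_le_pow₀ hC, fun A B _ _ hAs hBs hA₁ hA₂ hB₁ hB₂ ↦ ?_⟩
  set M : ℝ → Matrix (Fin n) (Fin n) ℝ := fun t ↦ (1 - t) • B + t • A
  have hM_symm t : (M t).IsSymm := (hBs.smul _).add (hAs.smul _)
  have hcof_symm t : (cof (M t)).IsSymm := cof_eq_adjugate (hM_symm t) ▸ (hM_symm t).adjugate
  have hcof t (ht : t ∈ Set.Icc (0 : ℝ) 1) :
      cof (M t) ∈ Set.Icc ((C ^ (n + 1))⁻¹ • 1) (C ^ (n + 1) • 1) :=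
    cof_mem_Icc (hM_symm t) (zero_lt_one.trans_le hC)
      (convex_Icc _ _ ⟨hB₁, hB₂⟩ ⟨hA₁, hA₂⟩ (by linarith [ht.2]) ht.1 (by ring))
  have hD := Matrix.entrywiseIntegral_mem_Icc zero_le_one
    (Continuous.matrix_adjugate (by fun_prop)).matrix_transpose hcof
  rw [sub_zero, one_smul, one_smul] at hD
  exact ⟨Matrix.isHermitian_iff_isSymm.mp <| Matrix.isHermitian_entrywiseIntegral fun t _ ↦
    Matrix.isHermitian_iff_isSymm.mpr (hcof_symm t), hD.1, hD.2⟩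

theorem stmt13 (n : ℕ) (hn : 1 ≤ n) (C : ℝ) (hC : 1 ≤ C) :
    ∃ C₁ : ℝ, 1 ≤ C₁ ∧ ∀ A B : Matrix (Fin n) (Fin n) ℝ,
      A.PosDef → B.PosDef → A.IsSymm → B.IsSymm →
      MatLE (C⁻¹ • (1 : Matrix (Fin n) (Fin n) ℝ)) A →
      MatLE A (C • (1 : Matrix (Fin n) (Fin n) ℝ)) →
      MatLE (C⁻¹ • (1 : Matrix (Fin n) (Fin n) ℝ)) B →
      MatLE B (C • (1 : Matrix (Fin n) (Fin n) ℝ)) →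
      (Matrix.of fun i j => ∫ t in (0:ℝ)..1, cof ((1 - t) • B + t • A) i j).IsSymm ∧
      MatLE (C₁⁻¹ • (1 : Matrix (Fin n) (Fin n) ℝ))
        (Matrix.of fun i j => ∫ t in (0:ℝ)..1, cof ((1 - t) • B + t • A) i j) ∧
      MatLE (Matrix.of fun i j => ∫ t in (0:ℝ)..1, cof ((1 - t) • B + t • A) i j)
        (C₁ • (1 : Matrix (Fin n) (Fin n) ℝ)) :=
  stmt13_general n C hC
end
end
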